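/- arXiv:1107.5016 — 3 statements merged into one kernel-verified Lean document; each statement's English description precedes it below -/
import Mathlib

section
/- Let χ be the character of a representation ρ of a group into SL(2, ℂ), and suppose elements x, y, t satisfy the relations t x t⁻¹ = x y x² and t y t⁻¹ = x⁻¹. If a = χ(x), then χ(y) = a, and a ≠ 1 implies χ(xy) = a/(a-1). -/
/-!
Conjugating by `t` shows that `χ y = χ x⁻¹ = χ x` and `χ (x * y) = χ (x * y * x)`. The SL(2) trace
identity `χ (z * w) + χ (z * w⁻¹) = χ z * χ w` with `z = x * y`, `w = x` then gives
`χ (x * y) + χ y = χ x * χ (x * y)`, a linear equation for `χ (x * y)`.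
-/

open Matrix

section TraceCharacter

variable {G : Type*} [Group G] {n R : Type*} [Fintype n] [DecidableEq n] [CommRing R]

def traceChar (ρ : G →* Matrix.SpecialLinearGroup n R) (g : G) : R :=
  trace (ρ g : Matrix n n R)

theorem traceChar_conj (ρ : G →* Matrix.SpecialLinearGroup n R) (g h : G) :
    traceChar ρ (h * g * h⁻¹) = traceChar ρ g := by
  simp only [traceChar, map_mul, map_inv, Matrix.SpecialLinearGroup.coe_mul,
    Matrix.SpecialLinearGroup.coe_inv]
  rw [trace_mul_cycle, adjugate_mul, (ρ h).2, one_smul, one_mul]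

theorem trace_adjugate_fin_two (A : Matrix (Fin 2) (Fin 2) R) : trace (adjugate A) = trace A := by
  rw [adjugate_fin_two, trace_fin_two_of, trace_fin_two, add_comm]

theorem trace_mul_add_trace_mul_adjugate_fin_two (A B : Matrix (Fin 2) (Fin 2) R) :
    trace (A * B) + trace (A * adjugate B) = trace A * trace B := by
  simp only [adjugate_fin_two, trace_fin_two, mul_apply, Fin.sum_univ_two, of_apply, cons_val',
    cons_val_zero, cons_val_one, empty_val', cons_val_fin_one]
  ring

theorem traceChar_inv (ρ : G →* Matrix.SpecialLinearGroup (Fin 2) R) (g : G) :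
    traceChar ρ g⁻¹ = traceChar ρ g := by
  rw [traceChar, traceChar, map_inv, Matrix.SpecialLinearGroup.coe_inv, trace_adjugate_fin_two]

theorem traceChar_mul_add_traceChar_mul_inv (ρ : G →* Matrix.SpecialLinearGroup (Fin 2) R)
    (g h : G) : traceChar ρ (g * h) + traceChar ρ (g * h⁻¹) = traceChar ρ g * traceChar ρ h := by
  simp only [traceChar, map_mul, map_inv, Matrix.SpecialLinearGroup.coe_mul,
    Matrix.SpecialLinearGroup.coe_inv]
  exact trace_mul_add_trace_mul_adjugate_fin_two _ _

end TraceCharacter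

theorem stmt_8 {G : Type*} [Group G] (x y t : G)
    (hx : t * x * t⁻¹ = x * y * x ^ 2) (hy : t * y * t⁻¹ = x⁻¹)
    (ρ : G →* Matrix.SpecialLinearGroup (Fin 2) ℂ)
    (χ : G → ℂ) (hχ : ∀ g, χ g = Matrix.trace ((ρ g : Matrix (Fin 2) (Fin 2) ℂ)))
    (a : ℂ) (ha : a = χ x) :
    χ y = a ∧ (a ≠ 1 → χ (x * y) = a / (a - 1)) := by
  obtain rfl : χ = traceChar ρ := funext hχ
  subst ha
  have hya : traceChar ρ y = traceChar ρ x := by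
    rw [← traceChar_conj ρ y t, hy, traceChar_inv]
  have hxyx : traceChar ρ (x * y * x) = traceChar ρ (x * y) := by
    have hconj : t * (x * y) * t⁻¹ = x * y * x :=
      calc t * (x * y) * t⁻¹ = (t * x * t⁻¹) * (t * y * t⁻¹) := by group
        _ = x * y * x := by rw [hx, hy]; group
    rw [← traceChar_conj ρ (x * y) t, hconj]
  have hlin : traceChar ρ (x * y) + traceChar ρ x = traceChar ρ (x * y) * traceChar ρ x := by
    rw [← traceChar_mul_add_traceChar_mul_inv, hxyx, traceChar_conj, hya]
  refine ⟨hya, fun hne => ?_⟩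
  rw [eq_div_iff (sub_ne_zero_of_ne hne)]
  linear_combination -hlin
end

section
/- Define κ(a, b, c) = a² + b² + c² - abc - 2. Then for every real a ≠ 1, κ(a, a, a/(a-1)) = (a-1)² + (a-1) - 2 + (a-1)⁻¹ + (a-1)⁻², and this quantity is at least -2. -/
/-- `κ(a,b,c) = a² + b² + c² - abc - 2`. -/
def kappa (a b c : ℝ) : ℝ := a ^ 2 + b ^ 2 + c ^ 2 - a * b * c - 2

/-!
With `t = a - 1` the third argument is `1 + t⁻¹`, and `κ + 2 = t² + t + t⁻¹ + t⁻²`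
factors as `(t + 1)² (t² - t + 1) / t²`, which is nonnegative since `t² - t + 1 > 0`.
-/

theorem kappa_self_self_div_sub_one {a : ℝ} (ha : a ≠ 1) :
    kappa a a (a / (a - 1))
      = (a - 1) ^ 2 + (a - 1) - 2 + (a - 1)⁻¹ + ((a - 1) ^ 2)⁻¹ := by
  have ht : a - 1 ≠ 0 := sub_ne_zero.mpr ha
  unfold kappa
  field_simp
  ring

-- Both sides vanish at `t = 0`, so no hypothesis `t ≠ 0` is needed.
theorem sq_add_self_add_inv_add_inv_sq (t : ℝ) :
    t ^ 2 + t + t⁻¹ + (t ^ 2)⁻¹ = (t + 1) ^ 2 * (t ^ 2 - t + 1) / t ^ 2 := by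
  rcases eq_or_ne t 0 with rfl | ht
  · simp
  · field_simp
    ring

theorem sq_add_self_add_inv_add_inv_sq_nonneg (t : ℝ) :
    0 ≤ t ^ 2 + t + t⁻¹ + (t ^ 2)⁻¹ := by
  have hquad : 0 ≤ t ^ 2 - t + 1 := by nlinarith [sq_nonneg (t - 1 / 2)]
  rw [sq_add_self_add_inv_add_inv_sq]
  exact div_nonneg (mul_nonneg (sq_nonneg _) hquad) (sq_nonneg _)

theorem stmt_9 (a : ℝ) (ha : a ≠ 1) :
    kappa a a (a / (a - 1))
        = (a - 1) ^ 2 + (a - 1) - 2 + (a - 1)⁻¹ + ((a - 1) ^ 2)⁻¹ ∧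
      -2 ≤ kappa a a (a / (a - 1)) := by
  have hκ := kappa_self_self_div_sub_one ha
  refine ⟨hκ, ?_⟩
  rw [hκ]
  linarith [sq_add_self_add_inv_add_inv_sq_nonneg (a - 1)]
end

section
/- Define κ(a, b, c) = a² + b² + c² - abc - 2. For real a ≠ 1, the triple (a, a, κ(a, a, a/(a-1))) lies in [-2, 2]³ if and only if -(√5 + 1)/2 ≤ a ≤ (√5 - 1)/2 or a = 2. -/
lemma kappa_diag_add_two {a : ℝ} (ha : a ≠ 1) :
    kappa a a (a / (a - 1)) + 2 = a ^ 2 * (a ^ 2 - 3 * a + 3) / (a - 1) ^ 2 := by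
  have : a - 1 ≠ 0 := sub_ne_zero.mpr ha
  unfold kappa
  field_simp
  ring

lemma kappa_diag_sub_two {a : ℝ} (ha : a ≠ 1) :
    kappa a a (a / (a - 1)) - 2 = (a - 2) ^ 2 * (a ^ 2 + a - 1) / (a - 1) ^ 2 := by
  have : a - 1 ≠ 0 := sub_ne_zero.mpr ha
  unfold kappa
  field_simp
  ring

lemma neg_two_le_kappa_diag {a : ℝ} (ha : a ≠ 1) : -2 ≤ kappa a a (a / (a - 1)) := by
  have hnum : 0 ≤ a ^ 2 * (a ^ 2 - 3 * a + 3) :=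
    mul_nonneg (sq_nonneg a) (by nlinarith [sq_nonneg (a - 3 / 2)])
  have := div_nonneg hnum (sq_nonneg (a - 1))
  linarith [kappa_diag_add_two ha]

lemma kappa_diag_le_two_iff {a : ℝ} (ha : a ≠ 1) :
    kappa a a (a / (a - 1)) ≤ 2 ↔ a = 2 ∨ a ^ 2 + a - 1 ≤ 0 := by
  have hden : 0 < (a - 1) ^ 2 := by positivity [sub_ne_zero.mpr ha]
  rw [← sub_nonpos, kappa_diag_sub_two ha, div_le_iff₀ hden, zero_mul]
  constructor
  · intro h
    by_cases h2 : a = 2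
    · exact Or.inl h2
    · have : 0 < (a - 2) ^ 2 := by positivity [sub_ne_zero.mpr h2]
      exact Or.inr (nonpos_of_mul_nonpos_right h this)
  · rintro (rfl | h)
    · norm_num
    · exact mul_nonpos_of_nonneg_of_nonpos (sq_nonneg _) h

lemma sq_add_self_sub_one_nonpos_iff {a : ℝ} :
    a ^ 2 + a - 1 ≤ 0 ↔ -(Real.sqrt 5 + 1) / 2 ≤ a ∧ a ≤ (Real.sqrt 5 - 1) / 2 := by
  have hs : Real.sqrt 5 ^ 2 = 5 := Real.sq_sqrt (by norm_num)
  have hs0 : 0 ≤ Real.sqrt 5 := Real.sqrt_nonneg 5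
  have hfac : 4 * (a ^ 2 + a - 1) = (2 * a + 1 + Real.sqrt 5) * (2 * a + 1 - Real.sqrt 5) := by
    nlinarith
  constructor
  · intro h
    constructor <;> nlinarith
  · rintro ⟨h1, h2⟩
    nlinarith [mul_nonpos_of_nonneg_of_nonpos (by linarith : 0 ≤ 2 * a + 1 + Real.sqrt 5)
      (by linarith : 2 * a + 1 - Real.sqrt 5 ≤ 0)]

lemma mem_Icc_neg_two_two_of_sq_add_self_sub_one_nonpos {a : ℝ} (h : a ^ 2 + a - 1 ≤ 0) :
    a ∈ Set.Icc (-2 : ℝ) 2 :=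
  ⟨by nlinarith, by nlinarith⟩

theorem stmt_10 (a : ℝ) (ha : a ≠ 1) :
    (a ∈ Set.Icc (-2 : ℝ) 2 ∧ kappa a a (a / (a - 1)) ∈ Set.Icc (-2 : ℝ) 2)
      ↔ ((-(Real.sqrt 5 + 1) / 2 ≤ a ∧ a ≤ (Real.sqrt 5 - 1) / 2) ∨ a = 2) := by
  have hκ : kappa a a (a / (a - 1)) ∈ Set.Icc (-2 : ℝ) 2 ↔ a = 2 ∨ a ^ 2 + a - 1 ≤ 0 := by
    rw [Set.mem_Icc, and_iff_right (neg_two_le_kappa_diag ha), kappa_diag_le_two_iff ha]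
  rw [hκ, ← sq_add_self_sub_one_nonpos_iff]
  constructor
  · rintro ⟨-, h⟩
    exact h.symm
  · rintro (h | rfl)
    · exact ⟨mem_Icc_neg_two_two_of_sq_add_self_sub_one_nonpos h, Or.inr h⟩
    · norm_num
end
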